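/- arXiv:2512.19258 — 2 statements merged into one kernel-verified Lean document; each statement's English description precedes it below -/
import Mathlib

section
/- Let W ∈ ℝ^{n×n} satisfy ∑_j |w_{ij}| = 1 for all i, and let β = diag(β_1,…,β_n) with β_i ∈ [0,1]. If in the digraph associated with W every node i with β_i = 0 is reachable by a directed path from some node j with β_j > 0, then ρ((I − β)W) < 1. -/
/-- The spectral radius of a real square matrix. -/
noncomputable def specRad {m : Type*} [Fintype m] [DecidableEq m]
    (M : Matrix m m ℝ) : ENNReal :=
  spectralRadius ℂ (M.map (algebraMap ℝ ℂ))

/-- In the digraph associated with `W` (edge `(j,i)` iff `W i j ≠ 0`), node `b` is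
reachable from node `a` by a directed path. -/
def MatReachable {n : ℕ} (W : Matrix (Fin n) (Fin n) ℝ) (a b : Fin n) : Prop :=
  Relation.ReflTransGen (fun u v => W v u ≠ 0) a b

open Finset

/-- "Reachable from a stubborn node in at most k steps". -/
def RS {n : ℕ} (W : Matrix (Fin n) (Fin n) ℝ) (β : Fin n → ℝ) : ℕ → Fin n → Prop
  | 0, i => 0 < β i
  | (k+1), i => RS W β k i ∨ ∃ l, W i l ≠ 0 ∧ RS W β k l

lemma RS_of_reach {n : ℕ} {W : Matrix (Fin n) (Fin n) ℝ} {β : Fin n → ℝ} {j i : Fin n}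
    (hj : 0 < β j) (h : MatReachable W j i) : ∃ k, RS W β k i := by
  induction h with
  | refl => exact ⟨0, hj⟩
  | tail _ hbc ih =>
    obtain ⟨k, hk⟩ := ih
    exact ⟨k+1, Or.inr ⟨_, hbc, hk⟩⟩

lemma RS_unfold {n : ℕ} {W : Matrix (Fin n) (Fin n) ℝ} {β : Fin n → ℝ} :
    ∀ k i, RS W β k i → 0 < β i ∨ ∃ l, W i l ≠ 0 ∧ ∃ k' < k, RS W β k' l := by
  intro k
  induction k with
  | zero => intro i h; exact Or.inl h
  | succ k ih =>
    intro i h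
    rcases h with h | ⟨l, hl, hR⟩
    · rcases ih i h with h' | ⟨l, hl, k', hk', hR⟩
      · exact Or.inl h'
      · exact Or.inr ⟨l, hl, k', hk'.trans (Nat.lt_succ_self k), hR⟩
    · exact Or.inr ⟨l, hl, k, Nat.lt_succ_self k, hR⟩

section Core

variable {n : ℕ} (W : Matrix (Fin n) (Fin n) ℝ) (β : Fin n → ℝ)

/-- row absolute sums of powers of `A = (I - diag β) W`. -/
noncomputable def rowf (k : ℕ) (i : Fin n) : ℝ :=
  ∑ j, |(((1 - Matrix.diagonal β) * W) ^ k) i j|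

variable {W β}

lemma A_apply (i j : Fin n) :
    ((1 - Matrix.diagonal β) * W) i j = (1 - β i) * W i j := by
  have : (1 : Matrix (Fin n) (Fin n) ℝ) - Matrix.diagonal β
      = Matrix.diagonal (fun i => 1 - β i) := by
    rw [← Matrix.diagonal_one, ← Matrix.diagonal_sub]
  rw [this, Matrix.diagonal_mul]

lemma A_rowsum (hW : ∀ i, ∑ j, |W i j| = 1) (hβ : ∀ i, β i ∈ Set.Icc (0 : ℝ) 1) (i : Fin n) :
    ∑ j, |((1 - Matrix.diagonal β) * W) i j| = 1 - β i := by
  have h1 : (0:ℝ) ≤ 1 - β i := by have := (hβ i).2; linarith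
  simp_rw [A_apply, abs_mul, abs_of_nonneg h1, ← Finset.mul_sum, hW i, mul_one]

lemma rowf_succ_le (k : ℕ) (i : Fin n) :
    rowf W β (k+1) i ≤ ∑ u, |((1 - Matrix.diagonal β) * W) i u| * rowf W β k u := by
  set A := (1 - Matrix.diagonal β) * W with hA
  have : ∀ j, |(A ^ (k+1)) i j| ≤ ∑ u, |A i u| * |(A ^ k) u j| := by
    intro j
    rw [pow_succ', Matrix.mul_apply]
    refine (Finset.abs_sum_le_sum_abs _ _).trans ?_
    exact le_of_eq (by simp [abs_mul])
  calc rowf W β (k+1) i ≤ ∑ j, ∑ u, |A i u| * |(A ^ k) u j| :=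
        Finset.sum_le_sum fun j _ => this j
    _ = ∑ u, |A i u| * rowf W β k u := by
        rw [Finset.sum_comm]
        simp [rowf, Finset.mul_sum, hA]

lemma rowf_le_one (hW : ∀ i, ∑ j, |W i j| = 1) (hβ : ∀ i, β i ∈ Set.Icc (0 : ℝ) 1) :
    ∀ k i, rowf W β k i ≤ 1 := by
  intro k
  induction k with
  | zero =>
    intro i
    simp [rowf, Matrix.one_apply, apply_ite]
  | succ k ih =>
    intro i
    refine (rowf_succ_le k i).trans ?_
    calc ∑ u, |((1 - Matrix.diagonal β) * W) i u| * rowf W β k u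
        ≤ ∑ u, |((1 - Matrix.diagonal β) * W) i u| * 1 :=
          Finset.sum_le_sum fun u _ => mul_le_mul_of_nonneg_left (ih u) (abs_nonneg _)
      _ = 1 - β i := by simp [A_rowsum hW hβ]
      _ ≤ 1 := by have := (hβ i).1; linarith

lemma rowf_lt_one (hW : ∀ i, ∑ j, |W i j| = 1) (hβ : ∀ i, β i ∈ Set.Icc (0 : ℝ) 1) :
    ∀ m i k, RS W β k i → k < m → rowf W β m i < 1 := by
  intro m
  induction m with
  | zero => intro i k _ hk; omega
  | succ m ih =>
    intro i k hR hk
    set A := (1 - Matrix.diagonal β) * W with hA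
    have hle : ∀ u, |A i u| * rowf W β m u ≤ |A i u| * 1 := fun u =>
      mul_le_mul_of_nonneg_left (rowf_le_one hW hβ m u) (abs_nonneg _)
    by_cases hb : 0 < β i
    · calc rowf W β (m+1) i ≤ ∑ u, |A i u| * rowf W β m u := rowf_succ_le m i
        _ ≤ ∑ u, |A i u| * 1 := Finset.sum_le_sum fun u _ => hle u
        _ = 1 - β i := by simp only [mul_one]; exact A_rowsum hW hβ i
        _ < 1 := by linarith
    · have hb0 : β i = 0 := le_antisymm (not_lt.mp hb) (hβ i).1
      rcases RS_unfold k i hR with h | ⟨l, hl, k', hk', hR'⟩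
      · exact absurd h hb
      · have hml : rowf W β m l < 1 := ih l k' hR' (by omega)
        have hAl : 0 < |A i l| := by
          rw [hA, A_apply, hb0]
          simpa using hl
        calc rowf W β (m+1) i ≤ ∑ u, |A i u| * rowf W β m u := rowf_succ_le m i
          _ < ∑ u, |A i u| * 1 :=
            Finset.sum_lt_sum (fun u _ => hle u)
              ⟨l, Finset.mem_univ l, by
                have := mul_lt_mul_of_pos_left hml hAl
                simpa using this⟩
          _ = 1 - β i := by simp only [mul_one]; exact A_rowsum hW hβ i
          _ = 1 := by rw [hb0]; ring

end Core

attribute [local instance] Matrix.linftyOpNormedRing Matrix.linftyOpNormedAlgebra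

/-- For a signed row-normalized matrix `W` (each absolute row sum equals 1) and
stubbornness values `β i ∈ [0,1]`, if every non-stubborn node (`β i = 0`) is
reachable from some stubborn node (`β j > 0`), then `ρ((I - β)W) < 1`. -/
theorem specRad_FJ_lt_one {n : ℕ} (W : Matrix (Fin n) (Fin n) ℝ) (β : Fin n → ℝ)
    (hW : ∀ i, ∑ j, |W i j| = 1)
    (hβ : ∀ i, β i ∈ Set.Icc (0 : ℝ) 1)
    (hreach : ∀ i, β i = 0 → ∃ j, 0 < β j ∧ MatReachable W j i) :
    specRad ((1 - Matrix.diagonal β) * W) < 1 := by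
  -- every node is RS-reachable for some k
  have hex : ∀ i : Fin n, ∃ k, RS W β k i := by
    intro i
    by_cases hb : 0 < β i
    · exact ⟨0, hb⟩
    · have hb0 : β i = 0 := le_antisymm (not_lt.mp hb) (hβ i).1
      obtain ⟨j, hj, hr⟩ := hreach i hb0
      exact RS_of_reach hj hr
  -- uniform bound K
  set K : ℕ := Finset.univ.sup (fun i => (hex i).choose) with hK
  have hrow : ∀ i, rowf W β (K + 1) i < 1 := by
    intro i
    refine rowf_lt_one hW hβ (K+1) i (hex i).choose (hex i).choose_spec ?_
    have : (hex i).choose ≤ K := Finset.le_sup (f := fun i => (hex i).choose) (Finset.mem_univ i)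
    omega
  set A := (1 - Matrix.diagonal β) * W with hA
  set B := A.map (algebraMap ℝ ℂ) with hB
  have hBpow : B ^ (K + 1) = (A ^ (K+1)).map (algebraMap ℝ ℂ) := by
    rw [hB]
    exact (map_pow ((algebraMap ℝ ℂ).mapMatrix) A (K+1)).symm
  -- nnnorm of B^(K+1) is < 1
  have hnorm : ‖B ^ (K + 1)‖₊ < 1 := by
    rw [hBpow, Matrix.linfty_opNNNorm_def]
    rcases isEmpty_or_nonempty (Fin n) with h | h
    · simp
    · rw [Finset.sup_lt_iff (by norm_num : (⊥ : NNReal) < 1)]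
      intro i _
      have heq : ∑ j, ‖((A ^ (K + 1)).map (algebraMap ℝ ℂ)) i j‖₊
          = ∑ j, ‖(A ^ (K+1)) i j‖₊ := by
        simp [Matrix.map_apply, nnnorm_algebraMap']
      rw [heq]
      have : ((∑ j, ‖(A ^ (K+1)) i j‖₊ : NNReal) : ℝ) < 1 := by
        push_cast
        have hr : ∑ j, |(A ^ (K+1)) i j| < 1 := hrow i
        simpa [Real.norm_eq_abs] using hr
      exact_mod_cast this
  have hone : ‖(1 : Matrix (Fin n) (Fin n) ℂ)‖₊ ≤ 1 := by
    rw [Matrix.linfty_opNNNorm_def]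
    refine Finset.sup_le fun i _ => ?_
    have : ∀ j, ‖(1 : Matrix (Fin n) (Fin n) ℂ) i j‖₊ = if i = j then 1 else 0 := by
      intro j
      rw [Matrix.one_apply]
      split <;> simp
    simp [this]
  have hle := spectrum.spectralRadius_le_pow_nnnorm_pow_one_div ℂ B K
  have hpos : (0:ℝ) < 1 / (K + 1) := by positivity
  have h1 : ((‖B ^ (K + 1)‖₊ : ENNReal)) ^ (1 / (K + 1) : ℝ) < 1 := by
    apply ENNReal.rpow_lt_one _ hpos
    exact_mod_cast hnorm
  have h2 : ((‖(1 : Matrix (Fin n) (Fin n) ℂ)‖₊ : ENNReal)) ^ (1 / (K + 1) : ℝ) ≤ 1 := by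
    apply ENNReal.rpow_le_one _ hpos.le
    exact_mod_cast hone
  calc specRad A ≤ _ := hle
    _ ≤ ((‖B ^ (K + 1)‖₊ : ENNReal)) ^ (1 / (K + 1) : ℝ) * 1 := mul_le_mul_right h2 _
    _ < 1 := by rwa [mul_one]
end

section
/- Let R = I − (I−β)W restricted suitably, and suppose ρ((I−β)W) < 1. If p is an LTP agent, q ∈ N_p, α^c = N_p \ {q}, and α its complement, then in the Schur complement R/α^c the row corresponding to q has nonzero entries only in the columns corresponding to p and q. -/
/-- `l` is a directed path (a walk without repeated nodes) from `s` to `t` in the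
digraph with edge relation `E`. -/
def IsPathList {V : Type*} (E : V → V → Prop) (s t : V) (l : List V) : Prop :=
  l.Chain' E ∧ l.head? = some s ∧ l.getLast? = some t ∧ l.Nodup

/-- `q` is persuaded by `p`: `q` is a non-stubborn node distinct from `p` such that
every directed path from every stubborn node to `q` traverses `p`. -/
def Persuaded {V : Type*} (E : V → V → Prop) (S : Set V) (p q : V) : Prop :=
  q ∉ S ∧ q ≠ p ∧ ∀ s ∈ S, ∀ l : List V, IsPathList E s q l → p ∈ l

/-- `p` is a Locally Topologically Persuasive (LTP) agent: some non-stubborn node is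
persuaded by `p`, and if `p` is non-stubborn then there is no node `c ≠ p` through
which every path from stubborn nodes to `p` passes. -/
def IsLTP {V : Type*} (E : V → V → Prop) (S : Set V) (p : V) : Prop :=
  (∃ q, Persuaded E S p q) ∧
  (p ∉ S → ¬ ∃ c, c ≠ p ∧ ∀ s ∈ S, ∀ l : List V, IsPathList E s p l → c ∈ l)

/-- The submatrix of `M` with rows indexed by `s` and columns indexed by `t`. -/
def subMat {n : ℕ} (M : Matrix (Fin n) (Fin n) ℝ) (s t : Finset (Fin n)) :
    Matrix s t ℝ :=
  M.submatrix (fun i : s => (i : Fin n)) (fun j : t => (j : Fin n))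

/-- If `l` is persuaded by `p`, then any in-neighbour `j ≠ p` of `l` must itself be
persuaded by `p` (so if `j` is not persuaded, the edge weight vanishes). -/
lemma no_edge_of_not_persuaded {n : ℕ} (W : Matrix (Fin n) (Fin n) ℝ)
    (E : Fin n → Fin n → Prop) (S : Set (Fin n))
    (hE : ∀ i j, E j i ↔ W i j ≠ 0) (p a j : Fin n)
    (ha : Persuaded E S p a) (hj : ¬ Persuaded E S p j) (hjp : j ≠ p) :
    W a j = 0 := by
  by_contra hW0
  have hEja : E j a := (hE a j).mpr hW0
  obtain ⟨haS, hap, hapath⟩ := ha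
  rw [Persuaded] at hj
  push_neg at hj
  by_cases hjS : j ∈ S
  · have hja : j ≠ a := fun h => haS (h ▸ hjS)
    have hpl : IsPathList E j a [j, a] := by
      refine ⟨?_, rfl, rfl, ?_⟩
      · exact List.isChain_pair.mpr hEja
      · simp [hja]
    have := hapath j hjS [j, a] hpl
    simp at this
    rcases this with h | h
    · exact hjp h.symm
    · exact hap h.symm
  · obtain ⟨s, hsS, lst, hpath, hplst⟩ := hj hjS hjp
    obtain ⟨hch, hhd, hlast, hnd⟩ := hpath
    by_cases hal : a ∈ lst
    · obtain ⟨u, v, rfl⟩ := List.append_of_mem hal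
      have hpre : IsPathList E s a (u ++ [a]) := by
        refine ⟨?_, ?_, ?_, ?_⟩
        · have : List.Chain' E ((u ++ [a]) ++ v) := by simpa using hch
          exact (List.isChain_append.mp this).1
        · rcases u with _ | ⟨x, u⟩ <;> simpa using hhd
        · simp
        · have : ((u ++ [a]) ++ v).Nodup := by simpa using hnd
          exact this.of_append_left
      have := hapath s hsS _ hpre
      apply hplst
      rcases List.mem_append.mp this with h | h
      · exact List.mem_append_left _ h
      · simp at h
        subst h
        simp
    · have hext : IsPathList E s a (lst ++ [a]) := by
        refine ⟨?_, ?_, ?_, ?_⟩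
        · refine List.isChain_append.mpr ⟨hch, List.isChain_singleton a, ?_⟩
          intro x hx y hy
          rw [hlast] at hx
          simp at hx hy
          subst hx; subst hy
          exact hEja
        · have : lst ≠ [] := by
            intro h; rw [h] at hhd; simp at hhd
          rcases lst with _ | ⟨x, l'⟩
          · exact absurd rfl this
          · simpa using hhd
        · simp
        · simp [List.nodup_append, hnd, hal]
          intro x hx h
          exact hal (h ▸ hx)
      have := hapath s hsS _ hext
      rcases List.mem_append.mp this with h | h
      · exact hplst h
      · simp at h
        exact hap h.symm

/-- Let `R = I - (I - β)W` with `ρ((I-β)W) < 1`. If `p` is an LTP agent,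
`q ∈ N_p` and `αᶜ = N_p \ {q}` (with `α` its complement), then in the Schur
complement `R/αᶜ` the row corresponding to `q` has nonzero entries only in the
columns corresponding to `p` and `q`. -/

theorem schur_row_of_persuaded {n : ℕ}
    (W : Matrix (Fin n) (Fin n) ℝ) (β : Fin n → ℝ) (E : Fin n → Fin n → Prop)
    (S : Set (Fin n))
    (hE : ∀ i j, E j i ↔ W i j ≠ 0)
    (hS : ∀ i, i ∈ S ↔ 0 < β i)
    (hβ : ∀ i, β i ∈ Set.Icc (0 : ℝ) 1)
    (hW : ∀ i, ∑ j, |W i j| = 1)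
    (hρ : specRad ((1 - Matrix.diagonal β) * W) < 1)
    (hreach : ∀ v, v ∉ S → ∃ s ∈ S, ∃ l : List (Fin n), IsPathList E s v l)
    (p q : Fin n) (hp : IsLTP E S p) (hq : Persuaded E S p q)
    (α : Finset (Fin n)) (hα : ∀ i, i ∈ α ↔ ¬ (Persuaded E S p i ∧ i ≠ q))
    (R : Matrix (Fin n) (Fin n) ℝ)
    (hR : R = 1 - (1 - Matrix.diagonal β) * W) :
    ∀ j : α,
      (subMat R α α - subMat R α αᶜ * (subMat R αᶜ αᶜ)⁻¹ * subMat R αᶜ α)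
          ⟨q, (hα q).mpr fun h => h.2 rfl⟩ j ≠ 0 →
      (j : Fin n) = p ∨ (j : Fin n) = q := by
  intro j hne
  by_contra hcon
  push_neg at hcon
  apply hne
  have hjα : (j : Fin n) ∈ α := j.2
  have hjnp : ¬ Persuaded E S p (j : Fin n) := fun h => ((hα j).mp hjα) ⟨h, hcon.2⟩
  have hRzero : ∀ a : Fin n, Persuaded E S p a → R a (j : Fin n) = 0 := by
    intro a ha
    have hW0 : W a (j : Fin n) = 0 :=
      no_edge_of_not_persuaded W E S hE p a j ha hjnp hcon.1
    have haj : a ≠ (j : Fin n) := fun h => hjnp (h ▸ ha)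
    rw [hR]
    simp [Matrix.sub_apply, Matrix.sub_mul, Matrix.diagonal_mul,
      Matrix.one_apply_ne haj, hW0]
  have hkpers : ∀ k : (αᶜ : Finset (Fin n)), Persuaded E S p (k : Fin n) := by
    intro k
    have hk : (k : Fin n) ∉ α := Finset.mem_compl.mp k.2
    have := (hα (k : Fin n))
    by_contra hnk
    exact hk (this.mpr (fun h => hnk h.1))
  simp only [Matrix.sub_apply, Matrix.mul_apply, subMat, Matrix.submatrix_apply]
  rw [hRzero q hq]
  rw [Finset.sum_eq_zero (fun k _ => by rw [hRzero k (hkpers k), mul_zero])]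
  ring
end
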